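/- The Cayley graph of the alternating group A₄ with connection set {(1 2)(3 4), (1 3)(2 4), (1 2 3), (1 3 2)} has (-1 + √17)/2 as an eigenvalue; in particular, A₄ admits a non-integral Cayley graph with connection set of size 4. -/

import Mathlib

/-- The Cayley graph of a group `G` with connection set `S`. For a symmetric set `S`
with `1 ∉ S`, `g` and `h` are adjacent iff `h * g⁻¹ ∈ S`. -/
def cayley {G : Type*} [Group G] (S : Set G) : SimpleGraph G :=
  SimpleGraph.fromRel (fun g h => h * g⁻¹ ∈ S)

/-- A finite graph is integral if all eigenvalues of its adjacency matrix are integers. -/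
def IsIntegralGraph {V : Type*} [Finite V] (Γ : SimpleGraph V) : Prop :=
  letI := Fintype.ofFinite V
  letI := Classical.decEq V
  letI : DecidableRel Γ.Adj := Classical.decRel _
  ∀ μ ∈ spectrum ℝ (Γ.adjMatrix ℝ), ∃ z : ℤ, (z : ℝ) = μ

/-- `μ` is an eigenvalue of the adjacency matrix of the finite graph `Γ`. -/
def IsAdjEigenvalue {V : Type*} [Finite V] (Γ : SimpleGraph V) (μ : ℝ) : Prop :=
  letI := Fintype.ofFinite V
  letI := Classical.decEq V
  letI : DecidableRel Γ.Adj := Classical.decRel _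
  μ ∈ spectrum ℝ (Γ.adjMatrix ℝ)

/-- The permutation (1 2)(3 4) as an element of A₄. -/
def a4a : alternatingGroup (Fin 4) := ⟨Equiv.swap 0 1 * Equiv.swap 2 3, by rw [Equiv.Perm.mem_alternatingGroup]; decide⟩

/-- The permutation (1 3)(2 4) as an element of A₄. -/
def a4b : alternatingGroup (Fin 4) := ⟨Equiv.swap 0 2 * Equiv.swap 1 3, by rw [Equiv.Perm.mem_alternatingGroup]; decide⟩

/-- The 3-cycle (1 2 3) as an element of A₄. -/
def a4c : alternatingGroup (Fin 4) := ⟨Equiv.swap 0 2 * Equiv.swap 0 1, by rw [Equiv.Perm.mem_alternatingGroup]; decide⟩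

/-!
The adjacency operator of `Cay(G, S)` sends `f` to `g ↦ ∑_{s ∈ S} f (s * g)`. If `w : X → ℝ` is an
eigenvector, for `μ`, of the operator `w ↦ ∑_{s ∈ S} w ∘ s` on a permutation module `ℝ^X` of `G`,
then the matrix coefficient `g ↦ ∑_x w x * w (g • x)` is an eigenvector of `Cay(G, S)` for the same
`μ`; it is nonzero since its value at `1` is `‖w‖²`. For `A₄` acting on four points,
`w = (4μ - 8, 4 - 3μ, 4 - 3μ, 2μ)` is such an eigenvector whenever `μ² + μ = 4`, and both roots
`(-1 ± √17) / 2` of this equation are irrational.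
-/

open Finset Matrix

section Cayley

variable {G : Type*} [Group G]

theorem cayley_adj_iff {S : Set G} (hS : ∀ s ∈ S, s⁻¹ ∈ S) (h1 : (1 : G) ∉ S) (g h : G) :
    (cayley S).Adj g h ↔ h * g⁻¹ ∈ S := by
  simp only [cayley, SimpleGraph.fromRel_adj]
  constructor
  · rintro ⟨-, hgh | hhg⟩
    · exact hgh
    · simpa using hS _ hhg
  · refine fun hgh => ⟨?_, Or.inl hgh⟩
    rintro rfl
    exact h1 (by simpa using hgh)

variable [Fintype G] {S : Finset G} [DecidableRel (cayley (S : Set G)).Adj]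

theorem cayley_adjMatrix_mulVec_apply {α : Type*} [NonAssocSemiring α]
    (hS : ∀ s ∈ S, s⁻¹ ∈ S) (h1 : (1 : G) ∉ S) (f : G → α) (g : G) :
    ((cayley (S : Set G)).adjMatrix α *ᵥ f) g = ∑ s ∈ S, f (s * g) := by
  have hnbr : (cayley (S : Set G)).neighborFinset g = S.map (Equiv.mulRight g).toEmbedding := by
    ext h
    simp [cayley_adj_iff (S := (S : Set G)) hS h1]
  rw [SimpleGraph.adjMatrix_mulVec_apply, hnbr, Finset.sum_map]
  rfl

theorem mem_spectrum_cayley_adjMatrix [DecidableEq G] (hS : ∀ s ∈ S, s⁻¹ ∈ S) (h1 : (1 : G) ∉ S)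
    {f : G → ℝ} (hf : f ≠ 0) {μ : ℝ} (hμ : ∀ g, ∑ s ∈ S, f (s * g) = μ * f g) :
    μ ∈ spectrum ℝ ((cayley (S : Set G)).adjMatrix ℝ) := by
  rw [← Matrix.spectrum_toLin', ← Module.End.hasEigenvalue_iff_mem_spectrum]
  refine Module.End.hasEigenvalue_of_hasEigenvector ⟨?_, hf⟩
  rw [Module.End.mem_eigenspace_iff, Matrix.toLin'_apply]
  ext g
  rw [cayley_adjMatrix_mulVec_apply hS h1, hμ, Pi.smul_apply, smul_eq_mul]

end Cayley

theorem isAdjEigenvalue_iff {V : Type*} [Fintype V] [DecidableEq V] (Γ : SimpleGraph V)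
    [DecidableRel Γ.Adj] (μ : ℝ) : IsAdjEigenvalue Γ μ ↔ μ ∈ spectrum ℝ (Γ.adjMatrix ℝ) := by
  unfold IsAdjEigenvalue
  convert Iff.rfl

theorem not_isIntegralGraph_of_irrational {V : Type*} [Finite V] {Γ : SimpleGraph V} {μ : ℝ}
    (hμ : IsAdjEigenvalue Γ μ) (hirr : Irrational μ) : ¬ IsIntegralGraph Γ :=
  fun hΓ => let ⟨z, hz⟩ := hΓ μ hμ; hirr.ne_int z hz.symm

section MatrixCoeff

variable {G X : Type*} [Group G] [MulAction G X] [Fintype X]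

def matrixCoeff (w : X → ℝ) (g : G) : ℝ := ∑ x, w x * w (g • x)

theorem matrixCoeff_ne_zero {w : X → ℝ} (hw : w ≠ 0) : (matrixCoeff w : G → ℝ) ≠ 0 := by
  intro h
  have h1 : ∑ x, w x * w x = 0 := by simpa [matrixCoeff] using congrFun h 1
  rw [Finset.sum_eq_zero_iff_of_nonneg fun x _ => mul_self_nonneg (w x)] at h1
  exact hw (funext fun x => mul_self_eq_zero.mp (h1 x (mem_univ x)))

theorem sum_matrixCoeff_mul {S : Finset G} {w : X → ℝ} {μ : ℝ}
    (hw : ∀ x, ∑ s ∈ S, w (s • x) = μ * w x) (g : G) :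
    ∑ s ∈ S, matrixCoeff w (s * g) = μ * matrixCoeff w g := by
  simp only [matrixCoeff, mul_smul]
  rw [Finset.sum_comm, Finset.mul_sum]
  refine Finset.sum_congr rfl fun x _ => ?_
  rw [← Finset.mul_sum, hw]
  ring

end MatrixCoeff

def a4Weight (μ : ℝ) : Fin 4 → ℝ := ![4 * μ - 8, 4 - 3 * μ, 4 - 3 * μ, 2 * μ]

theorem a4Weight_ne_zero {μ : ℝ} (hμ : μ ^ 2 + μ = 4) : a4Weight μ ≠ 0 := by
  intro h
  have hμ0 : μ = 0 := by simpa [a4Weight] using congrFun h 3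
  norm_num [hμ0] at hμ

theorem sum_smul_a4Weight {μ : ℝ} (hμ : μ ^ 2 + μ = 4) (x : Fin 4) :
    ∑ s ∈ ({a4a, a4b, a4c, a4c⁻¹} : Finset (alternatingGroup (Fin 4))), a4Weight μ (s • x) =
      μ * a4Weight μ x := by
  rw [Finset.sum_insert (by decide), Finset.sum_insert (by decide), Finset.sum_insert (by decide),
    Finset.sum_singleton]
  fin_cases x <;> simp [a4Weight, a4a, a4b, a4c, Subgroup.smul_def, Equiv.swap_apply_def] <;>
    linarith

theorem isAdjEigenvalue_cayley_a4 {μ : ℝ} (hμ : μ ^ 2 + μ = 4) :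
    IsAdjEigenvalue (cayley ({a4a, a4b, a4c, a4c⁻¹} : Set (alternatingGroup (Fin 4)))) μ := by
  classical
  have hS : (({a4a, a4b, a4c, a4c⁻¹} : Finset (alternatingGroup (Fin 4))) : Set _) =
      {a4a, a4b, a4c, a4c⁻¹} := by
    simp
  rw [isAdjEigenvalue_iff, ← hS]
  exact mem_spectrum_cayley_adjMatrix (by decide) (by decide)
    (matrixCoeff_ne_zero (a4Weight_ne_zero hμ)) (sum_matrixCoeff_mul (sum_smul_a4Weight hμ))

theorem irrational_of_sq_add_self_eq_four {μ : ℝ} (hμ : μ ^ 2 + μ = 4) : Irrational μ := by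
  have hsq : (2 * μ + 1) ^ 2 = √17 ^ 2 := by
    rw [Real.sq_sqrt (by norm_num)]
    linear_combination 4 * hμ
  have h17 : Irrational √17 := by norm_num
  have h : Irrational (2 * μ + 1) := by
    rcases sq_eq_sq_iff_eq_or_eq_neg.mp hsq with h | h <;> rw [h]
    exacts [h17, h17.neg]
  exact (Irrational.of_add_natCast 1 (by exact_mod_cast h)).of_natCast_mul 2

theorem A4_cayley_not_integral :
    IsAdjEigenvalue (cayley ({a4a, a4b, a4c, a4c⁻¹} : Set (alternatingGroup (Fin 4))))
      ((-1 + Real.sqrt 17) / 2) ∧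
    ¬ IsIntegralGraph (cayley ({a4a, a4b, a4c, a4c⁻¹} : Set (alternatingGroup (Fin 4)))) := by
  have hroot : ((-1 + √17) / 2) ^ 2 + (-1 + √17) / 2 = 4 := by
    linear_combination Real.sq_sqrt (show (0 : ℝ) ≤ 17 by norm_num) / 4
  have heig := isAdjEigenvalue_cayley_a4 hroot
  exact ⟨heig, not_isIntegralGraph_of_irrational heig (irrational_of_sq_add_self_eq_four hroot)⟩
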